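/- arXiv:2409.00728 — 3 statements merged into one kernel-verified Lean document; each statement's English description precedes it below -/
import Mathlib

section
/- For mutually absolutely continuous probability measures $P_0, P_1$, the function $g(\lambda) = \lambda D_{\mathrm{KL}}(P_0\|P_1) - \log \mathsf{E}_{P_1}[(dP_0/dP_1)^\lambda]$ satisfies $\sup_{\lambda \geq 0} g(\lambda) = g(1) = D_{\mathrm{KL}}(P_0 \| P_1)$, provided $\mathsf{E}_{P_1}[(dP_0/dP_1)^\lambda] < \infty$ for all $\lambda \geq 0$. -/
/-!
Write `f = dP₀/dP₁`. By Jensen's inequality for `exp` under `P₀`,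
  `exp ((λ - 1) D_KL(P₀‖P₁)) ≤ ∫ f^(λ-1) dP₀ ≤ ∫ f^λ dP₁`,
the last step being the change of measure `dP₀ = f dP₁` and `f · f^(λ-1) ≤ f^λ`.
Hence `g(λ) ≤ D_KL(P₀‖P₁) = g(1)` for every `λ`, the equality because `∫ f dP₁ = 1`.
-/

open MeasureTheory Real

lemma exp_mul_integral_log_le_integral_rpow {Ω : Type*} [MeasurableSpace Ω] {μ : Measure Ω}
    [IsProbabilityMeasure μ] {g : Ω → ℝ} (hg : ∀ᵐ ω ∂μ, 0 < g ω)
    (hlog : Integrable (fun ω => log (g ω)) μ) {t : ℝ}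
    (hpow : Integrable (fun ω => g ω ^ t) μ) :
    exp (t * ∫ ω, log (g ω) ∂μ) ≤ ∫ ω, g ω ^ t ∂μ := by
  have hpow_eq : (fun ω => g ω ^ t) =ᵐ[μ] fun ω => exp (t * log (g ω)) := by
    filter_upwards [hg] with ω hω
    rw [rpow_def_of_pos hω, mul_comm]
  rw [← integral_const_mul, integral_congr_ae hpow_eq]
  exact convexOn_exp.map_integral_le continuousOn_exp isClosed_univ
    (.of_forall fun _ => trivial) (hlog.const_mul t) (hpow.congr hpow_eq)

lemma mul_rpow_sub_one_le_rpow {x : ℝ} (hx : 0 ≤ x) (y : ℝ) : x * x ^ (y - 1) ≤ x ^ y := by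
  rcases hx.eq_or_lt with rfl | hx
  · simpa using rpow_nonneg le_rfl y
  · rw [rpow_sub_one hx.ne', mul_div_cancel₀ _ hx.ne']

section RnDeriv

variable {Ω : Type*} [MeasurableSpace Ω] {μ ν : Measure Ω} [SigmaFinite μ] [SigmaFinite ν]

lemma integrable_toReal_rnDeriv_rpow_sub_one (hμν : μ ≪ ν) {l : ℝ}
    (hl : Integrable (fun ω => (μ.rnDeriv ν ω).toReal ^ l) ν) :
    Integrable (fun ω => (μ.rnDeriv ν ω).toReal ^ (l - 1)) μ := by
  rw [← integrable_rnDeriv_smul_iff hμν]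
  refine hl.mono' (by fun_prop) (.of_forall fun ω => ?_)
  rw [smul_eq_mul, norm_of_nonneg (by positivity)]
  exact mul_rpow_sub_one_le_rpow ENNReal.toReal_nonneg l

lemma integral_toReal_rnDeriv_rpow_sub_one_le (hμν : μ ≪ ν) {l : ℝ}
    (hl : Integrable (fun ω => (μ.rnDeriv ν ω).toReal ^ l) ν) :
    ∫ ω, (μ.rnDeriv ν ω).toReal ^ (l - 1) ∂μ ≤ ∫ ω, (μ.rnDeriv ν ω).toReal ^ l ∂ν := by
  rw [← integral_rnDeriv_smul hμν]
  exact integral_mono_of_nonneg (.of_forall fun ω => by positivity) hl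
    (.of_forall fun ω => mul_rpow_sub_one_le_rpow ENNReal.toReal_nonneg l)

lemma sub_one_mul_integral_log_rnDeriv_le_log_integral_rpow [IsProbabilityMeasure μ]
    (hμν : μ ≪ ν) (hKL : Integrable (fun ω => log (μ.rnDeriv ν ω).toReal) μ) {l : ℝ}
    (hl : Integrable (fun ω => (μ.rnDeriv ν ω).toReal ^ l) ν) :
    (l - 1) * ∫ ω, log (μ.rnDeriv ν ω).toReal ∂μ
      ≤ log (∫ ω, (μ.rnDeriv ν ω).toReal ^ l ∂ν) := by
  have hpos : ∀ᵐ ω ∂μ, 0 < (μ.rnDeriv ν ω).toReal := by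
    filter_upwards [Measure.rnDeriv_pos hμν, hμν.ae_le (Measure.rnDeriv_lt_top μ ν)]
      with ω h0 htop
    exact ENNReal.toReal_pos h0.ne' htop.ne
  have hjensen := exp_mul_integral_log_le_integral_rpow hpos hKL
    (integrable_toReal_rnDeriv_rpow_sub_one hμν hl)
  have hchange := integral_toReal_rnDeriv_rpow_sub_one_le hμν hl
  exact (le_log_iff_exp_le ((exp_pos _).trans_le (hjensen.trans hchange))).2
    (hjensen.trans hchange)

end RnDeriv

theorem stmt_6_general {Ω : Type*} [MeasurableSpace Ω] (P0 P1 : Measure Ω)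
    [IsProbabilityMeasure P0] [IsProbabilityMeasure P1]
    (hac0 : P0 ≪ P1)
    (hKL : Integrable (fun ω => Real.log ((P0.rnDeriv P1 ω).toReal)) P0)
    (hmom : ∀ l : ℝ, 0 ≤ l → Integrable (fun ω => ((P0.rnDeriv P1 ω).toReal) ^ l) P1) :
    IsLUB {y : ℝ | ∃ l : ℝ, 0 ≤ l ∧
        y = l * (∫ ω, Real.log ((P0.rnDeriv P1 ω).toReal) ∂P0)
              - Real.log (∫ ω, ((P0.rnDeriv P1 ω).toReal) ^ l ∂P1)}
      ((1 : ℝ) * (∫ ω, Real.log ((P0.rnDeriv P1 ω).toReal) ∂P0)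
        - Real.log (∫ ω, ((P0.rnDeriv P1 ω).toReal) ^ (1 : ℝ) ∂P1))
    ∧ (1 : ℝ) * (∫ ω, Real.log ((P0.rnDeriv P1 ω).toReal) ∂P0)
        - Real.log (∫ ω, ((P0.rnDeriv P1 ω).toReal) ^ (1 : ℝ) ∂P1)
      = ∫ ω, Real.log ((P0.rnDeriv P1 ω).toReal) ∂P0 := by
  have hone : ∫ ω, (P0.rnDeriv P1 ω).toReal ^ (1 : ℝ) ∂P1 = 1 := by
    simp [Measure.integral_toReal_rnDeriv hac0]
  have hval : (1 : ℝ) * (∫ ω, log (P0.rnDeriv P1 ω).toReal ∂P0)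
      - log (∫ ω, (P0.rnDeriv P1 ω).toReal ^ (1 : ℝ) ∂P1)
      = ∫ ω, log (P0.rnDeriv P1 ω).toReal ∂P0 := by
    rw [hone, log_one, one_mul, sub_zero]
  refine ⟨IsGreatest.isLUB ⟨⟨1, zero_le_one, rfl⟩, ?_⟩, hval⟩
  rintro _ ⟨l, hl, rfl⟩
  have hbound :=
    sub_one_mul_integral_log_rnDeriv_le_log_integral_rpow hac0 hKL (hmom l hl)
  rw [hval]
  linarith

/-- `g(λ) = λ D_KL(P0‖P1) - log E_{P1}[(dP0/dP1)^λ]` attains its supremum over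
`λ ≥ 0` at `λ = 1`, where the value is `D_KL(P0‖P1)`. -/
theorem stmt_6 {Ω : Type*} [MeasurableSpace Ω] (P0 P1 : Measure Ω)
    [IsProbabilityMeasure P0] [IsProbabilityMeasure P1]
    (hac0 : P0 ≪ P1) (hac1 : P1 ≪ P0)
    (hKL : Integrable (fun ω => Real.log ((P0.rnDeriv P1 ω).toReal)) P0)
    (hmom : ∀ l : ℝ, 0 ≤ l → Integrable (fun ω => ((P0.rnDeriv P1 ω).toReal) ^ l) P1) :
    IsLUB {y : ℝ | ∃ l : ℝ, 0 ≤ l ∧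
        y = l * (∫ ω, Real.log ((P0.rnDeriv P1 ω).toReal) ∂P0)
              - Real.log (∫ ω, ((P0.rnDeriv P1 ω).toReal) ^ l ∂P1)}
      ((1 : ℝ) * (∫ ω, Real.log ((P0.rnDeriv P1 ω).toReal) ∂P0)
        - Real.log (∫ ω, ((P0.rnDeriv P1 ω).toReal) ^ (1 : ℝ) ∂P1))
    ∧ (1 : ℝ) * (∫ ω, Real.log ((P0.rnDeriv P1 ω).toReal) ∂P0)
        - Real.log (∫ ω, ((P0.rnDeriv P1 ω).toReal) ^ (1 : ℝ) ∂P1)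
      = ∫ ω, Real.log ((P0.rnDeriv P1 ω).toReal) ∂P0 :=
  stmt_6_general P0 P1 hac0 hKL hmom
end

section
/- Let $P_\theta$ for $\theta \in [0,1]$ denote the exponentially tilted distribution with density proportional to $P_0(x)^{1-\theta} P_1(x)^{\theta}$ for mutually absolutely continuous probability measures $P_0, P_1$ with finite Chernoff integrals. If $\theta^* \in (0,1)$ maximizes $\theta \mapsto -\log \int P_0(x)^{1-\theta} P_1(x)^{\theta} dx$, then $D_{\mathrm{KL}}(P_{\theta^*} \| P_0) = D_{\mathrm{KL}}(P_{\theta^*} \| P_1) = \mathrm{CI}(P_0, P_1)$, where $\mathrm{CI}(P_0, P_1) = \sup_{\theta \in [0,1]} -\log \int P_0^{1-\theta} P_1^{\theta}$ is the Chernoff information. -/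
/-!
At an interior maximiser `θ*` of `θ ↦ -log Z(θ)`, where `Z(θ) = ∫ p0^(1-θ) p1^θ`, the derivative
`Z'(θ*) = ∫ p0^(1-θ*) p1^θ* log (p1 / p0)` vanishes; differentiating under the integral is
justified by `|log r| ≤ (r^δ + r^(-δ)) / δ`, which dominates the derivative on a neighbourhood of
`θ*` by the integrands at the endpoints `0` and `1`. Since `log (P_θ* / P0) = θ* log (p1 / p0) - log Z(θ*)`
and `log (P_θ* / P1) = (θ* - 1) log (p1 / p0) - log Z(θ*)`, the vanishing of `Z'(θ*)` makes both
divergences equal to `-log Z(θ*)`, which is the Chernoff information because `θ*` is a maximiser.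
-/

open MeasureTheory Set Filter Topology

namespace Real

lemma abs_log_le_rpow_add_rpow_neg_div {r δ : ℝ} (hr : 0 < r) (hδ : 0 < δ) :
    |log r| ≤ (r ^ δ + r ^ (-δ)) / δ := by
  have hle := log_le_rpow_div hr.le hδ
  have hge := log_le_rpow_div (inv_pos.mpr hr).le hδ
  rw [log_inv, inv_rpow hr.le, ← rpow_neg hr.le] at hge
  have := rpow_pos_of_pos hr δ
  have := rpow_pos_of_pos hr (-δ)
  rw [abs_le]
  constructor
  · calc -((r ^ δ + r ^ (-δ)) / δ) ≤ -(r ^ (-δ) / δ) := by gcongr; linarith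
      _ ≤ log r := by linarith
  · calc log r ≤ r ^ δ / δ := hle
      _ ≤ (r ^ δ + r ^ (-δ)) / δ := by gcongr; linarith

lemma rpow_le_rpow_add_rpow {r a b t : ℝ} (hr : 0 < r) (hat : a ≤ t) (htb : t ≤ b) :
    r ^ t ≤ r ^ a + r ^ b := by
  rcases le_or_gt 1 r with h | h
  · linarith [rpow_le_rpow_of_exponent_le h htb, rpow_pos_of_pos hr a]
  · linarith [rpow_le_rpow_of_exponent_ge hr h.le hat, rpow_pos_of_pos hr b]

lemma rpow_mul_abs_log_le {r a b t δ : ℝ} (hr : 0 < r) (hδ : 0 < δ)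
    (ha : a ≤ t - δ) (hb : t + δ ≤ b) :
    r ^ t * |log r| ≤ 2 / δ * (r ^ a + r ^ b) := by
  calc r ^ t * |log r| ≤ r ^ t * ((r ^ δ + r ^ (-δ)) / δ) := by
        gcongr; exact abs_log_le_rpow_add_rpow_neg_div hr hδ
    _ = (r ^ (t + δ) + r ^ (t - δ)) / δ := by
        rw [rpow_add hr, rpow_sub hr, rpow_neg hr.le]; ring
    _ ≤ ((r ^ a + r ^ b) + (r ^ a + r ^ b)) / δ := by
        gcongr
        · exact rpow_le_rpow_add_rpow hr (by linarith) hb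
        · exact rpow_le_rpow_add_rpow hr ha (by linarith)
    _ = 2 / δ * (r ^ a + r ^ b) := by ring

lemma rpow_one_sub_mul_rpow {u v : ℝ} (hu : 0 < u) (hv : 0 ≤ v) (t : ℝ) :
    u ^ (1 - t) * v ^ t = u * (v / u) ^ t := by
  rw [div_rpow hv hu.le, rpow_sub hu, rpow_one]
  have := (rpow_pos_of_pos hu t).ne'
  field_simp

lemma hasDerivAt_rpow_one_sub_mul_rpow {u v : ℝ} (hu : 0 < u) (hv : 0 < v) (t : ℝ) :
    HasDerivAt (fun s => u ^ (1 - s) * v ^ s) (u ^ (1 - t) * v ^ t * log (v / u)) t := by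
  simp_rw [rpow_one_sub_mul_rpow hu hv.le]
  rw [mul_assoc]
  exact (hasStrictDerivAt_const_rpow (div_pos hv hu) t).hasDerivAt.const_mul u

lemma log_rpow_one_sub_mul_rpow_div_div_left {u v Z : ℝ} (hu : 0 < u) (hv : 0 < v) (hZ : 0 < Z)
    (θ : ℝ) : log (u ^ (1 - θ) * v ^ θ / Z / u) = θ * log (v / u) - log Z := by
  have := rpow_pos_of_pos hu (1 - θ)
  have := rpow_pos_of_pos hv θ
  rw [log_div (by positivity) hu.ne', log_div (by positivity) hZ.ne', log_mul (by positivity)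
    (by positivity), log_rpow hu, log_rpow hv, log_div hv.ne' hu.ne']
  ring

lemma log_rpow_one_sub_mul_rpow_div_div_right {u v Z : ℝ} (hu : 0 < u) (hv : 0 < v) (hZ : 0 < Z)
    (θ : ℝ) : log (u ^ (1 - θ) * v ^ θ / Z / v) = (θ - 1) * log (v / u) - log Z := by
  have := rpow_pos_of_pos hu (1 - θ)
  have := rpow_pos_of_pos hv θ
  rw [log_div (by positivity) hv.ne', log_div (by positivity) hZ.ne', log_mul (by positivity)
    (by positivity), log_rpow hu, log_rpow hv, log_div hv.ne' hu.ne']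
  ring

end Real

open Real

section ChernoffIntegral

variable {X : Type*} [MeasurableSpace X] {ν : Measure X}

lemma integral_pos_of_ae_pos {f : X → ℝ} (hν : ν ≠ 0) (hf : Integrable f ν)
    (hpos : ∀ᵐ x ∂ν, 0 < f x) : 0 < ∫ x, f x ∂ν := by
  refine (integral_nonneg_of_ae (hpos.mono fun _ h => h.le)).lt_of_ne fun h => hν ?_
  have hzero := (integral_eq_zero_iff_of_nonneg_ae (hpos.mono fun _ h => h.le) hf).mp h.symm
  rw [← ae_eq_bot, ← eventually_false_iff_eq_bot]
  filter_upwards [hpos, hzero] with x hx hx0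
  simp_all

lemma integral_div_mul_log_div_eq_neg_log {w L q : X → ℝ} (c : ℝ) (hw : Integrable w ν)
    (hwL : Integrable (fun x => w x * L x) ν) (hZ : ∫ x, w x ∂ν ≠ 0)
    (hL : ∫ x, w x * L x ∂ν = 0)
    (hq : ∀ᵐ x ∂ν, log (w x / (∫ y, w y ∂ν) / q x) = c * L x - log (∫ y, w y ∂ν)) :
    ∫ x, w x / (∫ y, w y ∂ν) * log (w x / (∫ y, w y ∂ν) / q x) ∂ν = -log (∫ y, w y ∂ν) := by
  set Z := ∫ y, w y ∂ν
  calc ∫ x, w x / Z * log (w x / Z / q x) ∂ν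
      = ∫ x, c / Z * (w x * L x) - log Z / Z * w x ∂ν := by
        refine integral_congr_ae ?_
        filter_upwards [hq] with x hx
        rw [hx]
        field_simp
    _ = -log Z := by
        rw [integral_sub (hwL.const_mul _) (hw.const_mul _), integral_const_mul,
          integral_const_mul, hL]
        field_simp
        ring

variable {p0 p1 : X → ℝ}

theorem hasDerivAt_integral_rpow_one_sub_mul_rpow
    (hp0 : ∀ᵐ x ∂ν, 0 < p0 x) (hp1 : ∀ᵐ x ∂ν, 0 < p1 x) {a b θ : ℝ}
    (hint : ∀ t ∈ Icc a b, Integrable (fun x => p0 x ^ (1 - t) * p1 x ^ t) ν)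
    (hθ : θ ∈ Ioo a b)
    (hmeas : AEStronglyMeasurable (fun x => p0 x ^ (1 - θ) * p1 x ^ θ * log (p1 x / p0 x)) ν) :
    HasDerivAt (fun t => ∫ x, p0 x ^ (1 - t) * p1 x ^ t ∂ν)
      (∫ x, p0 x ^ (1 - θ) * p1 x ^ θ * log (p1 x / p0 x) ∂ν) θ := by
  obtain ⟨hθa, hθb⟩ := hθ
  obtain ⟨δ, hδ, hδa, hδb⟩ : ∃ δ, 0 < δ ∧ a ≤ θ - 2 * δ ∧ θ + 2 * δ ≤ b :=
    ⟨min (θ - a) (b - θ) / 4, by positivity, by linarith [min_le_left (θ - a) (b - θ)],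
      by linarith [min_le_right (θ - a) (b - θ)]⟩
  have hab : a ≤ b := by linarith
  have hbound : Integrable (fun x => 2 / δ *
      (p0 x ^ (1 - a) * p1 x ^ a + p0 x ^ (1 - b) * p1 x ^ b)) ν :=
    ((hint a ⟨le_rfl, hab⟩).add (hint b ⟨hab, le_rfl⟩)).const_mul _
  have hF_meas : ∀ᶠ t in 𝓝 θ,
      AEStronglyMeasurable (fun x => p0 x ^ (1 - t) * p1 x ^ t) ν := by
    filter_upwards [Icc_mem_nhds hθa hθb] with t ht
    exact (hint t ht).aestronglyMeasurable
  have h_le : ∀ᵐ x ∂ν, ∀ t ∈ Metric.ball θ δ,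
      ‖p0 x ^ (1 - t) * p1 x ^ t * log (p1 x / p0 x)‖ ≤ 2 / δ *
        (p0 x ^ (1 - a) * p1 x ^ a + p0 x ^ (1 - b) * p1 x ^ b) := by
    filter_upwards [hp0, hp1] with x h0 h1 t ht
    rw [Metric.mem_ball, dist_eq, abs_sub_lt_iff] at ht
    have hr := div_pos h1 h0
    calc ‖p0 x ^ (1 - t) * p1 x ^ t * log (p1 x / p0 x)‖
        = p0 x * ((p1 x / p0 x) ^ t * |log (p1 x / p0 x)|) := by
          rw [rpow_one_sub_mul_rpow h0 h1.le, norm_mul, norm_mul, norm_of_nonneg h0.le,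
            norm_of_nonneg (rpow_nonneg hr.le _), norm_eq_abs, mul_assoc]
      _ ≤ p0 x * (2 / δ * ((p1 x / p0 x) ^ a + (p1 x / p0 x) ^ b)) := by
          refine mul_le_mul_of_nonneg_left (rpow_mul_abs_log_le hr hδ ?_ ?_) h0.le <;> linarith
      _ = _ := by
          rw [rpow_one_sub_mul_rpow h0 h1.le a, rpow_one_sub_mul_rpow h0 h1.le b]
          ring
  have h_diff : ∀ᵐ x ∂ν, ∀ t ∈ Metric.ball θ δ,
      HasDerivAt (fun s => p0 x ^ (1 - s) * p1 x ^ s)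
        (p0 x ^ (1 - t) * p1 x ^ t * log (p1 x / p0 x)) t := by
    filter_upwards [hp0, hp1] with x h0 h1 t _
    exact hasDerivAt_rpow_one_sub_mul_rpow h0 h1 t
  exact (hasDerivAt_integral_of_dominated_loc_of_deriv_le (Metric.ball_mem_nhds θ hδ) hF_meas
    (hint θ ⟨hθa.le, hθb.le⟩) hmeas h_le hbound h_diff).2

lemma integral_rpow_one_sub_mul_rpow_pos (hp0 : ∀ᵐ x ∂ν, 0 < p0 x) (hp1 : ∀ᵐ x ∂ν, 0 < p1 x)
    (hν : ν ≠ 0) {θ : ℝ} (hint : Integrable (fun x => p0 x ^ (1 - θ) * p1 x ^ θ) ν) :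
    0 < ∫ x, p0 x ^ (1 - θ) * p1 x ^ θ ∂ν :=
  integral_pos_of_ae_pos hν hint (by filter_upwards [hp0, hp1] with x h0 h1; positivity)

theorem integral_rpow_one_sub_mul_rpow_mul_log_eq_zero_of_isMaxOn
    (hp0 : ∀ᵐ x ∂ν, 0 < p0 x) (hp1 : ∀ᵐ x ∂ν, 0 < p1 x) (hν : ν ≠ 0) {a b θ : ℝ}
    (hint : ∀ t ∈ Icc a b, Integrable (fun x => p0 x ^ (1 - t) * p1 x ^ t) ν)
    (hθ : θ ∈ Ioo a b)
    (hmax : IsMaxOn (fun t => -log (∫ x, p0 x ^ (1 - t) * p1 x ^ t ∂ν)) (Icc a b) θ)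
    (hmeas : AEStronglyMeasurable (fun x => p0 x ^ (1 - θ) * p1 x ^ θ * log (p1 x / p0 x)) ν) :
    ∫ x, p0 x ^ (1 - θ) * p1 x ^ θ * log (p1 x / p0 x) ∂ν = 0 := by
  have hpos : ∀ t ∈ Icc a b, 0 < ∫ x, p0 x ^ (1 - t) * p1 x ^ t ∂ν := fun t ht =>
    integral_rpow_one_sub_mul_rpow_pos hp0 hp1 hν (hint t ht)
  have hmin : IsLocalMin (fun t => ∫ x, p0 x ^ (1 - t) * p1 x ^ t ∂ν) θ := by
    filter_upwards [Icc_mem_nhds hθ.1 hθ.2] with t ht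
    exact (log_le_log_iff (hpos θ (Ioo_subset_Icc_self hθ)) (hpos t ht)).mp
      (neg_le_neg_iff.mp (hmax ht))
  exact hmin.hasDerivAt_eq_zero (hasDerivAt_integral_rpow_one_sub_mul_rpow hp0 hp1 hint hθ hmeas)

end ChernoffIntegral

theorem stmt_8_general {X : Type*} [MeasurableSpace X] (ν : Measure X)
    (p0 p1 : X → ℝ)
    (hp0pos : ∀ᵐ x ∂ν, 0 < p0 x) (hp1pos : ∀ᵐ x ∂ν, 0 < p1 x)
    (hp0 : ∫ x, p0 x ∂ν = 1)
    (hint : ∀ θ ∈ Icc (0 : ℝ) 1, Integrable (fun x => p0 x ^ (1 - θ) * p1 x ^ θ) ν)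
    (θs : ℝ) (hθs : θs ∈ Ioo (0 : ℝ) 1)
    (hmax : ∀ θ ∈ Icc (0 : ℝ) 1,
      -Real.log (∫ x, p0 x ^ (1 - θ) * p1 x ^ θ ∂ν)
        ≤ -Real.log (∫ x, p0 x ^ (1 - θs) * p1 x ^ θs ∂ν))
    (hlog : Integrable
      (fun x => p0 x ^ (1 - θs) * p1 x ^ θs * Real.log (p1 x / p0 x)) ν) :
    -- the tilted density
    (∀ ptilt : X → ℝ,
      ptilt = (fun x =>
        p0 x ^ (1 - θs) * p1 x ^ θs / ∫ y, p0 y ^ (1 - θs) * p1 y ^ θs ∂ν) →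
      (∫ x, ptilt x * Real.log (ptilt x / p0 x) ∂ν
          = ∫ x, ptilt x * Real.log (ptilt x / p1 x) ∂ν)
      ∧ (∫ x, ptilt x * Real.log (ptilt x / p0 x) ∂ν
          = -Real.log (∫ x, p0 x ^ (1 - θs) * p1 x ^ θs ∂ν))
      ∧ (-Real.log (∫ x, p0 x ^ (1 - θs) * p1 x ^ θs ∂ν)
          = ⨆ θ : Icc (0 : ℝ) 1,
              -Real.log (∫ x, p0 x ^ (1 - θ.1) * p1 x ^ θ.1 ∂ν))) := by
  intro ptilt hpt
  have hθsI : θs ∈ Icc (0 : ℝ) 1 := Ioo_subset_Icc_self hθs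
  have hν : ν ≠ 0 := by rintro rfl; simp at hp0
  have hZ := integral_rpow_one_sub_mul_rpow_pos hp0pos hp1pos hν (hint θs hθsI)
  have hK := integral_rpow_one_sub_mul_rpow_mul_log_eq_zero_of_isMaxOn hp0pos hp1pos hν hint hθs
    (isMaxOn_iff.mpr hmax) hlog.aestronglyMeasurable
  have hD0 := integral_div_mul_log_div_eq_neg_log θs (hint θs hθsI) hlog hZ.ne' hK
    (by filter_upwards [hp0pos, hp1pos] with x h0 h1
        exact log_rpow_one_sub_mul_rpow_div_div_left h0 h1 hZ θs)
  have hD1 := integral_div_mul_log_div_eq_neg_log (θs - 1) (hint θs hθsI) hlog hZ.ne' hK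
    (by filter_upwards [hp0pos, hp1pos] with x h0 h1
        exact log_rpow_one_sub_mul_rpow_div_div_right h0 h1 hZ θs)
  have : Nonempty (Icc (0 : ℝ) 1) := ⟨⟨θs, hθsI⟩⟩
  subst hpt
  have hCI : IsGreatest (range fun θ : Icc (0 : ℝ) 1 =>
      -log (∫ x, p0 x ^ (1 - θ.1) * p1 x ^ θ.1 ∂ν))
      (-log (∫ x, p0 x ^ (1 - θs) * p1 x ^ θs ∂ν)) :=
    ⟨⟨⟨θs, hθsI⟩, rfl⟩, by rintro _ ⟨θ, rfl⟩; exact hmax θ θ.2⟩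
  exact ⟨hD0.trans hD1.symm, hD0, hCI.isLUB.ciSup_eq.symm⟩

/-- If `θ* ∈ (0,1)` maximizes the Chernoff exponent `θ ↦ -log ∫ p0^{1-θ} p1^θ dν`,
then the tilted distribution `p_{θ*} ∝ p0^{1-θ*} p1^{θ*}` satisfies
`D_KL(P_{θ*}‖P0) = D_KL(P_{θ*}‖P1) = CI(P0,P1)`. -/
theorem stmt_8 {X : Type*} [MeasurableSpace X] (ν : Measure X) [SigmaFinite ν]
    (p0 p1 : X → ℝ)
    (hp0pos : ∀ᵐ x ∂ν, 0 < p0 x) (hp1pos : ∀ᵐ x ∂ν, 0 < p1 x)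
    (hp0 : ∫ x, p0 x ∂ν = 1) (hp1 : ∫ x, p1 x ∂ν = 1)
    (hint : ∀ θ ∈ Icc (0 : ℝ) 1, Integrable (fun x => p0 x ^ (1 - θ) * p1 x ^ θ) ν)
    (θs : ℝ) (hθs : θs ∈ Ioo (0 : ℝ) 1)
    (hmax : ∀ θ ∈ Icc (0 : ℝ) 1,
      -Real.log (∫ x, p0 x ^ (1 - θ) * p1 x ^ θ ∂ν)
        ≤ -Real.log (∫ x, p0 x ^ (1 - θs) * p1 x ^ θs ∂ν))
    (hlog : Integrable
      (fun x => p0 x ^ (1 - θs) * p1 x ^ θs * Real.log (p1 x / p0 x)) ν) :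
    -- the tilted density
    (∀ ptilt : X → ℝ,
      ptilt = (fun x =>
        p0 x ^ (1 - θs) * p1 x ^ θs / ∫ y, p0 y ^ (1 - θs) * p1 y ^ θs ∂ν) →
      (∫ x, ptilt x * Real.log (ptilt x / p0 x) ∂ν
          = ∫ x, ptilt x * Real.log (ptilt x / p1 x) ∂ν)
      ∧ (∫ x, ptilt x * Real.log (ptilt x / p0 x) ∂ν
          = -Real.log (∫ x, p0 x ^ (1 - θs) * p1 x ^ θs ∂ν))
      ∧ (-Real.log (∫ x, p0 x ^ (1 - θs) * p1 x ^ θs ∂ν)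
          = ⨆ θ : Icc (0 : ℝ) 1,
              -Real.log (∫ x, p0 x ^ (1 - θ.1) * p1 x ^ θ.1 ∂ν))) :=
  stmt_8_general ν p0 p1 hp0pos hp1pos hp0 hint θs hθs hmax hlog
end

section
/- Let $a_{\tau j} \geq 0$ for $\tau \in [t]$, $j \in [n]$, and define $B = \frac{\left(\sum_{\tau,j} a_{\tau j}\right)^2}{\sum_{\tau,j} a_{\tau j}^2}$. If $\sum_{\tau=1}^t \sum_{j=1}^n (a_{\tau j} - 1)^2 \leq M$ for a constant $M$ independent of $t$, then $B \geq tn - \left(\sum_{\tau,j}(a_{\tau j}-1)^2\right) + o(1) \geq tn - M + o(1)$ as $t \to \infty$; i.e., $(\sum_{\tau,j} a_{\tau j})^2 / \sum_{\tau,j} a_{\tau j}^2 - (tn - \sum_{\tau,j}(a_{\tau j}-1)^2) \to 0$. -/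
/-!
Write `x = a - 1`, `N = tn`, `E = ∑ x` and `D = ∑ x²`. Then `∑ a = N + E` and `∑ a² = N + 2E + D`,
and expanding gives exactly `(∑ a)² / ∑ a² - (N - D) = (E + D)² / ∑ a²`. Here `D ≤ M` is bounded,
`∑ a² ≥ N/2 - D` grows linearly, and `E = o(√t)` because the row sums `∑ⱼ x_{τj}` are square
summable: cutting off a square-summable sequence at a late index `T`, Cauchy–Schwarz bounds the
remaining part of the partial sum by `√t` times the square root of a small tail.
-/

open Finset Filter Asymptotics

theorem sum_Icc_one_eq_sum_range {M : Type*} [AddCommMonoid M] (g : ℕ → M) (t : ℕ) :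
    ∑ τ ∈ Icc 1 t, g τ = ∑ k ∈ range t, g (k + 1) := by
  rw [range_eq_Ico, sum_Ico_add' g 0 t 1]
  rfl

theorem card_le_two_mul_sum_sq_add_sum_sq_sub_one {ι : Type*} (s : Finset ι) (f : ι → ℝ) :
    (#s : ℝ) ≤ 2 * (∑ i ∈ s, f i ^ 2 + ∑ i ∈ s, (f i - 1) ^ 2) := by
  rw [← sum_add_distrib, mul_sum, card_eq_sum_ones, Nat.cast_sum]
  exact sum_le_sum fun i _ => by push_cast; nlinarith [sq_nonneg (2 * f i - 1)]

theorem sq_sum_div_sum_sq_sub_eq {ι : Type*} (s : Finset ι) (f : ι → ℝ) :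
    (∑ i ∈ s, f i) ^ 2 / ∑ i ∈ s, f i ^ 2 - (#s - ∑ i ∈ s, (f i - 1) ^ 2)
      = (∑ i ∈ s, (f i - 1) + ∑ i ∈ s, (f i - 1) ^ 2) ^ 2 / ∑ i ∈ s, f i ^ 2 := by
  by_cases hQ : ∑ i ∈ s, f i ^ 2 = 0
  · have hf : ∀ i ∈ s, f i = 0 := fun i hi =>
      pow_eq_zero_iff two_ne_zero |>.1 <|
        (sum_eq_zero_iff_of_nonneg fun j _ => sq_nonneg (f j)).1 hQ i hi
    have hD : ∑ i ∈ s, (f i - 1) ^ 2 = (#s : ℝ) := by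
      rw [sum_congr rfl fun i hi => show (f i - 1) ^ 2 = (1 : ℝ) by rw [hf i hi]; norm_num]
      simp
    simp [hQ, hD]
  · have hS : ∑ i ∈ s, f i = #s + ∑ i ∈ s, (f i - 1) := by
      rw [card_eq_sum_ones, Nat.cast_sum, ← sum_add_distrib]
      exact sum_congr rfl fun i _ => by push_cast; ring
    have hQ' : ∑ i ∈ s, f i ^ 2 = #s + 2 * ∑ i ∈ s, (f i - 1) + ∑ i ∈ s, (f i - 1) ^ 2 := by
      rw [card_eq_sum_ones, Nat.cast_sum, mul_sum, ← sum_add_distrib, ← sum_add_distrib]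
      exact sum_congr rfl fun i _ => by push_cast; ring
    rw [eq_div_iff hQ, sub_mul, div_mul_cancel₀ _ hQ, hS, hQ']
    ring

theorem sum_range_isLittleO_sqrt_of_summable_sq {x : ℕ → ℝ} (hx : Summable fun k => x k ^ 2) :
    (fun t : ℕ => ∑ k ∈ range t, x k) =o[atTop] fun t => √(t : ℝ) := by
  refine isLittleO_iff.2 fun ε hε => ?_
  obtain ⟨T, hT⟩ := (hx.hasSum.tendsto_sum_nat.eventually
    (lt_mem_nhds (sub_lt_self _ (by positivity : 0 < ε ^ 2 / 4)))).exists
  set A := ∑ k ∈ range T, x k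
  filter_upwards [eventually_ge_atTop T,
    tendsto_natCast_atTop_atTop.eventually_ge_atTop (4 * A ^ 2 / ε ^ 2)] with t hTt htA
  have hA : A ^ 2 ≤ ε ^ 2 / 4 * t := by
    have := (div_le_iff₀ (by positivity)).1 htA
    linarith
  have htail : ∑ k ∈ Ico T t, x k ^ 2 ≤ ε ^ 2 / 4 := by
    have := hx.sum_le_tsum (range t) fun k _ => sq_nonneg (x k)
    rw [← sum_range_add_sum_Ico _ hTt] at this
    linarith
  have hB : (∑ k ∈ Ico T t, x k) ^ 2 ≤ ε ^ 2 / 4 * t := by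
    calc (∑ k ∈ Ico T t, x k) ^ 2 ≤ #(Ico T t) * ∑ k ∈ Ico T t, x k ^ 2 := sq_sum_le_card_mul_sum_sq
      _ ≤ t * (ε ^ 2 / 4) := by
          gcongr
          simp
      _ = ε ^ 2 / 4 * t := mul_comm _ _
  rw [← sum_range_add_sum_Ico _ hTt, Real.norm_eq_abs, Real.norm_of_nonneg (Real.sqrt_nonneg _),
    ← Real.sqrt_sq hε.le, ← Real.sqrt_mul (sq_nonneg ε)]
  refine Real.abs_le_sqrt ?_
  nlinarith [sq_nonneg (A - ∑ k ∈ Ico T t, x k)]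

section RowSums

variable {ι : Type*} [Fintype ι] {x : ℕ → ι → ℝ} {M : ℝ}

theorem summable_sq_sum_of_sum_Icc_sum_sq_le (hM : ∀ t, ∑ τ ∈ Icc 1 t, ∑ j, x τ j ^ 2 ≤ M) :
    Summable fun k => (∑ j, x (k + 1) j) ^ 2 := by
  have hrows : Summable fun k => ∑ j, x (k + 1) j ^ 2 :=
    summable_of_sum_range_le (fun k => sum_nonneg fun j _ => sq_nonneg _)
      fun t => sum_Icc_one_eq_sum_range (fun τ => ∑ j, x τ j ^ 2) t ▸ hM t
  refine .of_nonneg_of_le (fun k => sq_nonneg _) (fun k => ?_)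
    (hrows.mul_left (Fintype.card ι : ℝ))
  simpa using sq_sum_le_card_mul_sum_sq (s := univ) (f := x (k + 1))

theorem natCast_isBigO_sum_Icc_sum_sq [Nonempty ι]
    (hM : ∀ t, ∑ τ ∈ Icc 1 t, ∑ j, (x τ j - 1) ^ 2 ≤ M) :
    (fun t : ℕ => (t : ℝ)) =O[atTop] fun t => ∑ τ ∈ Icc 1 t, ∑ j, x τ j ^ 2 := by
  have hc : (0 : ℝ) < Fintype.card ι := Nat.cast_pos.2 Fintype.card_pos
  refine IsBigO.of_bound (4 / Fintype.card ι) ?_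
  filter_upwards [tendsto_natCast_atTop_atTop.eventually_ge_atTop (4 * M / Fintype.card ι)]
    with t ht
  have hcard := card_le_two_mul_sum_sq_add_sum_sq_sub_one (Icc 1 t ×ˢ univ) fun p => x p.1 p.2
  simp only [sum_product, card_product, Nat.card_Icc, card_univ] at hcard
  have hQ0 : 0 ≤ ∑ τ ∈ Icc 1 t, ∑ j, x τ j ^ 2 :=
    sum_nonneg fun τ _ => sum_nonneg fun j _ => sq_nonneg _
  rw [Real.norm_natCast, Real.norm_of_nonneg hQ0, div_mul_eq_mul_div, le_div_iff₀ hc]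
  have := (div_le_iff₀ hc).1 ht
  push_cast at hcard
  nlinarith [hM t]

end RowSums

theorem stmt_18_general (n : ℕ) (hn : 0 < n) (a : ℕ → Fin n → ℝ)
    (M : ℝ)
    (hM : ∀ t : ℕ, ∑ τ ∈ Finset.Icc 1 t, ∑ j, (a τ j - 1) ^ 2 ≤ M) :
    Tendsto (fun t : ℕ =>
        (∑ τ ∈ Finset.Icc 1 t, ∑ j, a τ j) ^ 2
            / (∑ τ ∈ Finset.Icc 1 t, ∑ j, (a τ j) ^ 2)
          - ((t : ℝ) * n - ∑ τ ∈ Finset.Icc 1 t, ∑ j, (a τ j - 1) ^ 2))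
      atTop (nhds 0) := by
  have : Nonempty (Fin n) := ⟨⟨0, hn⟩⟩
  set E : ℕ → ℝ := fun t => ∑ τ ∈ Icc 1 t, ∑ j, (a τ j - 1)
  set D : ℕ → ℝ := fun t => ∑ τ ∈ Icc 1 t, ∑ j, (a τ j - 1) ^ 2
  set Q : ℕ → ℝ := fun t => ∑ τ ∈ Icc 1 t, ∑ j, a τ j ^ 2
  have hE : E =o[atTop] fun t => √(t : ℝ) := by
    simpa only [E, sum_Icc_one_eq_sum_range] using sum_range_isLittleO_sqrt_of_summable_sq
      (summable_sq_sum_of_sum_Icc_sum_sq_le (x := fun τ j => a τ j - 1) hM)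
  have hD : D =o[atTop] fun t => √(t : ℝ) := by
    have hD0 t : 0 ≤ D t := sum_nonneg fun τ _ => sum_nonneg fun j _ => sq_nonneg _
    refine (IsBigO.of_bound M (.of_forall fun t => ?_)).trans_isLittleO
      ((isLittleO_one_left_iff ℝ).2 ?_)
    · simpa [abs_of_nonneg (hD0 t)] using hM t
    · exact tendsto_norm_atTop_atTop.comp
        (Real.tendsto_sqrt_atTop.comp tendsto_natCast_atTop_atTop)
  have key : (fun t => (E t + D t) ^ 2) =o[atTop] Q := by
    refine (((hE.add hD).pow two_pos).congr_right fun t => ?_).trans_isBigO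
      (natCast_isBigO_sum_Icc_sum_sq hM)
    exact Real.sq_sqrt (Nat.cast_nonneg t)
  refine key.tendsto_div_nhds_zero.congr fun t => ?_
  have := sq_sum_div_sum_sq_sub_eq (Icc 1 t ×ˢ (univ : Finset (Fin n))) fun p => a p.1 p.2
  simp only [sum_product, card_product, Nat.card_Icc, card_univ, Fintype.card_fin] at this
  simpa [E, D, Q] using this.symm

/-- If `a_{τj} ≥ 0` and `∑_{τ≤t} ∑_j (a_{τj}-1)² ≤ M` uniformly in `t`, then
`(∑ a)²/(∑ a²) - (tn - ∑ (a-1)²) → 0` as `t → ∞`. -/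
theorem stmt_18 (n : ℕ) (hn : 0 < n) (a : ℕ → Fin n → ℝ)
    (ha : ∀ τ j, 0 ≤ a τ j) (M : ℝ)
    (hM : ∀ t : ℕ, ∑ τ ∈ Finset.Icc 1 t, ∑ j, (a τ j - 1) ^ 2 ≤ M) :
    Tendsto (fun t : ℕ =>
        (∑ τ ∈ Finset.Icc 1 t, ∑ j, a τ j) ^ 2
            / (∑ τ ∈ Finset.Icc 1 t, ∑ j, (a τ j) ^ 2)
          - ((t : ℝ) * n - ∑ τ ∈ Finset.Icc 1 t, ∑ j, (a τ j - 1) ^ 2))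
      atTop (nhds 0) :=
  stmt_18_general n hn a M hM
end
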